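/- arXiv:2408.10212 — 5 statements merged into one kernel-verified Lean document; each statement's English description precedes it below -/
import Mathlib

section
/- Let j ≥ 0 and 0 ≤ k ≤ 2^j - 1 be integers and let h_{j,k} be the uniform Haar wavelet. Let ε > 0 and let g : [0,1] → ℝ be differentiable with |g'(x)| ≤ ε for all x ∈ [0,1]. Then the Haar wavelet coefficient a = 2^j ∫₀¹ g(t) h_{j,k}(t) dt satisfies |a| ≤ ε · 2^{-(j+1)}. -/
/-!
Write `a = k / 2^j` and `δ = 2^{-(j+1)}`, so that `h_{j,k}` is `1` on `[a, a + δ)`, `-1` on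
`[a + δ, a + 2δ)` and `0` elsewhere. Translating the second half onto the first, the coefficient
integral becomes `∫_a^{a+δ} (g t - g (t + δ)) dt`. By the mean value theorem `g` is
`ε`-Lipschitz, so the integrand is at most `εδ` and the integral at most `εδ²`; multiplying by
`2^j = 1 / (2δ)` gives `εδ / 2 ≤ εδ`.
-/

open MeasureTheory Set intervalIntegral
open scoped NNReal

/-- The uniform Haar wavelet `h_{j,k}` on `[0,1]`. -/
noncomputable def haar (j k : ℕ) (t : ℝ) : ℝ :=
  if (k : ℝ) / 2 ^ j ≤ t ∧ t < ((k : ℝ) + 1 / 2) / 2 ^ j then 1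
  else if ((k : ℝ) + 1 / 2) / 2 ^ j ≤ t ∧ t < ((k : ℝ) + 1) / 2 ^ j then -1
  else 0

section Haar

variable {j k : ℕ} {t : ℝ}

lemma haar_left_le_mid (j k : ℕ) : (k : ℝ) / 2 ^ j ≤ ((k : ℝ) + 1 / 2) / 2 ^ j := by
  gcongr; norm_num

lemma haar_mid_le_right (j k : ℕ) : ((k : ℝ) + 1 / 2) / 2 ^ j ≤ ((k : ℝ) + 1) / 2 ^ j := by
  gcongr; norm_num

lemma haar_eq_zero_of_lt (h : t < (k : ℝ) / 2 ^ j) : haar j k t = 0 := by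
  have := haar_left_le_mid j k
  unfold haar
  split_ifs with h₁ h₂
  · linarith [h₁.1]
  · linarith [h₂.1]
  · rfl

lemma haar_eq_zero_of_ge (h : ((k : ℝ) + 1) / 2 ^ j ≤ t) : haar j k t = 0 := by
  have := haar_mid_le_right j k
  unfold haar
  split_ifs with h₁ h₂
  · linarith [h₁.2]
  · linarith [h₂.2]
  · rfl

lemma haar_eq_one (h₁ : (k : ℝ) / 2 ^ j ≤ t) (h₂ : t < ((k : ℝ) + 1 / 2) / 2 ^ j) :
    haar j k t = 1 :=
  if_pos ⟨h₁, h₂⟩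

lemma haar_eq_neg_one (h₁ : ((k : ℝ) + 1 / 2) / 2 ^ j ≤ t) (h₂ : t < ((k : ℝ) + 1) / 2 ^ j) :
    haar j k t = -1 := by
  unfold haar
  rw [if_neg (fun h ↦ h.2.not_ge h₁), if_pos ⟨h₁, h₂⟩]

lemma measurable_haar (j k : ℕ) : Measurable (haar j k) := by
  unfold haar
  refine Measurable.ite ?_ measurable_const (Measurable.ite ?_ measurable_const measurable_const) <;>
  exact (measurableSet_le measurable_const measurable_id).inter
    (measurableSet_lt measurable_id measurable_const)

lemma norm_haar_le_one (j k : ℕ) (t : ℝ) : ‖haar j k t‖ ≤ 1 := by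
  unfold haar
  split_ifs <;> simp

end Haar

lemma IntervalIntegrable.mul_haar {g : ℝ → ℝ} {a b : ℝ} (hg : IntervalIntegrable g volume a b)
    (j k : ℕ) : IntervalIntegrable (fun t ↦ g t * haar j k t) volume a b := by
  rw [intervalIntegrable_iff] at hg ⊢
  exact hg.mul_bdd (measurable_haar j k).aestronglyMeasurable
    (Filter.Eventually.of_forall (norm_haar_le_one j k))

theorem integral_mul_haar {g : ℝ → ℝ} {j k : ℕ} (hk : k + 1 ≤ 2 ^ j)
    (hg : IntervalIntegrable g volume 0 1) :
    ∫ t in (0 : ℝ)..1, g t * haar j k t =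
      (∫ t in (k : ℝ) / 2 ^ j..((k : ℝ) + 1 / 2) / 2 ^ j, g t) -
        ∫ t in ((k : ℝ) + 1 / 2) / 2 ^ j..((k : ℝ) + 1) / 2 ^ j, g t := by
  set a : ℝ := (k : ℝ) / 2 ^ j
  set m : ℝ := ((k : ℝ) + 1 / 2) / 2 ^ j
  set b : ℝ := ((k : ℝ) + 1) / 2 ^ j
  have ha : 0 ≤ a := by positivity
  have ham : a ≤ m := haar_left_le_mid j k
  have hmb : m ≤ b := haar_mid_le_right j k
  have hb : b ≤ 1 := by
    rw [div_le_one (by positivity)]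
    exact_mod_cast hk
  have piece : ∀ c d : ℝ, 0 ≤ c → c ≤ d → d ≤ 1 →
      IntervalIntegrable (fun t ↦ g t * haar j k t) volume c d := fun c d hc hcd hd ↦
    (hg.mul_haar j k).mono_set
      (uIcc_subset_uIcc (by simp [hc, hcd.trans hd]) (by simp [hd, hc.trans hcd]))
  rw [← integral_add_adjacent_intervals (piece 0 a le_rfl ha (by linarith))
      (piece a 1 ha (by linarith) le_rfl),
    ← integral_add_adjacent_intervals (piece a m ha ham (by linarith))
      (piece m 1 (by linarith) (by linarith) le_rfl),
    ← integral_add_adjacent_intervals (piece m b (by linarith) hmb hb)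
      (piece b 1 (by linarith) hb le_rfl),
    integral_congr_Ioo_of_le ha (g := fun _ ↦ 0)
      (fun t ht ↦ by simp [haar_eq_zero_of_lt ht.2]),
    integral_congr_Ioo_of_le ham (g := g)
      (fun t ht ↦ by simp [haar_eq_one ht.1.le ht.2]),
    integral_congr_Ioo_of_le hmb (g := fun t ↦ -g t)
      (fun t ht ↦ by simp [haar_eq_neg_one ht.1.le ht.2]),
    integral_congr_Ioo_of_le hb (g := fun _ ↦ 0)
      (fun t ht ↦ by simp [haar_eq_zero_of_ge ht.1.le]),
    intervalIntegral.integral_neg, intervalIntegral.integral_zero, intervalIntegral.integral_zero]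
  ring

theorem LipschitzOnWith.abs_integral_sub_integral_shift_le {g : ℝ → ℝ} {K : ℝ≥0} {a δ : ℝ}
    (hδ : 0 ≤ δ) (hg : LipschitzOnWith K g (Icc a (a + 2 * δ))) :
    |(∫ t in a..a + δ, g t) - ∫ t in a + δ..a + 2 * δ, g t| ≤ K * δ ^ 2 := by
  have hshift : ∫ t in a + δ..a + 2 * δ, g t = ∫ t in a..a + δ, g (t + δ) := by
    rw [integral_comp_add_right]; ring_nf
  have hmem : ∀ t ∈ uIcc a (a + δ), t ∈ Icc a (a + 2 * δ) ∧ t + δ ∈ Icc a (a + 2 * δ) := by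
    intro t ht
    rw [uIcc_of_le (by linarith)] at ht
    exact ⟨⟨ht.1, by linarith [ht.2]⟩, ⟨by linarith [ht.1], by linarith [ht.2]⟩⟩
  have hg₀ : IntervalIntegrable g volume a (a + δ) :=
    (hg.continuousOn.mono fun t ht ↦ (hmem t ht).1).intervalIntegrable
  have hg₁ : IntervalIntegrable (fun t ↦ g (t + δ)) volume a (a + δ) :=
    (hg.continuousOn.comp (continuous_add_const δ).continuousOn
      fun t ht ↦ (hmem t ht).2).intervalIntegrable
  rw [hshift, ← integral_sub hg₀ hg₁, ← Real.norm_eq_abs]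
  calc ‖∫ t in a..a + δ, (g t - g (t + δ))‖ ≤ K * δ * |a + δ - a| := by
        refine norm_integral_le_of_norm_le_const fun t ht ↦ ?_
        obtain ⟨ht₀, ht₁⟩ := hmem t (uIoc_subset_uIcc ht)
        have := hg.dist_le_mul t ht₀ (t + δ) ht₁
        rwa [Real.dist_eq, Real.dist_eq, sub_add_cancel_left, abs_neg, abs_of_nonneg hδ] at this
    _ = K * δ ^ 2 := by rw [add_sub_cancel_left, abs_of_nonneg hδ]; ring

/-- If g is differentiable on [0,1] with |g'| ≤ ε there, then its Haar wavelet
coefficient a = 2^j ∫₀¹ g h_{j,k} satisfies |a| ≤ ε 2^{-(j+1)}. -/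
theorem haar_coeff_bound (j k : ℕ) (hk : k ≤ 2 ^ j - 1)
    (ε : ℝ) (hε : 0 < ε) (g g' : ℝ → ℝ)
    (hderiv : ∀ x ∈ Set.Icc (0:ℝ) 1, HasDerivAt g (g' x) x)
    (hbound : ∀ x ∈ Set.Icc (0:ℝ) 1, |g' x| ≤ ε) :
    |(2:ℝ) ^ j * ∫ t in (0:ℝ)..1, g t * haar j k t| ≤ ε / 2 ^ (j + 1) := by
  have hk' : k + 1 ≤ 2 ^ j := by have := Nat.one_le_two_pow (n := j); omega
  have hlip : LipschitzOnWith (⟨ε, hε.le⟩ : ℝ≥0) g (Icc 0 1) :=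
    (convex_Icc 0 1).lipschitzOnWith_of_nnnorm_hasDerivWithin_le
      (fun x hx ↦ (hderiv x hx).hasDerivWithinAt) (fun x hx ↦ NNReal.coe_le_coe.mp (hbound x hx))
  set δ : ℝ := 1 / 2 ^ (j + 1)
  set a : ℝ := (k : ℝ) / 2 ^ j
  have hmid : ((k : ℝ) + 1 / 2) / 2 ^ j = a + δ := by simp only [a, δ, pow_succ]; field_simp
  have hend : ((k : ℝ) + 1) / 2 ^ j = a + 2 * δ := by simp only [a, δ, pow_succ]; field_simp
  have hsupp : Icc a (a + 2 * δ) ⊆ Icc 0 1 := by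
    refine Icc_subset_Icc (by positivity) ?_
    rw [← hend, div_le_one (by positivity)]
    exact_mod_cast hk'
  rw [integral_mul_haar hk' (hlip.continuousOn.intervalIntegrable_of_Icc zero_le_one), hmid, hend,
    abs_mul, abs_of_pos (by positivity)]
  calc (2 : ℝ) ^ j * |(∫ t in a..a + δ, g t) - ∫ t in a + δ..a + 2 * δ, g t|
      ≤ 2 ^ j * (ε * δ ^ 2) := by
        gcongr
        exact (hlip.mono hsupp).abs_integral_sub_integral_shift_le (by positivity)
    _ ≤ ε / 2 ^ (j + 1) := by
        simp only [δ, pow_succ]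
        field_simp
        norm_num
end

section
/- Let α be a real number with 1 ≤ α ≤ 2, let Δ > 0 and a ∈ ℝ, and let t be a real number with t ≥ a + 2Δ. Then 0 ≤ (t - a)^α - 2(t - a - Δ)^α + (t - a - 2Δ)^α ≤ (2^α - 2) · Δ^α. -/
/-!
Write `u = t - a - 2Δ ≥ 0` and `g(u) = (u + 2Δ)^α - 2(u + Δ)^α + u^α`. The lower bound is midpoint
convexity of `x ↦ x^α`. For the upper bound, `g'(u) = α ((u + 2Δ)^(α-1) - 2(u + Δ)^(α-1) + u^(α-1))`
is a second difference of the concave function `x ↦ x^(α-1)`, hence nonpositive, so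
`g(u) ≤ g(0) = (2^α - 2) Δ^α`.
-/

open Set

lemma ConvexOn.secondDiff_nonneg {s : Set ℝ} {f : ℝ → ℝ} (hf : ConvexOn ℝ s f) {u h : ℝ}
    (hu : u ∈ s) (hu' : u + 2 * h ∈ s) :
    0 ≤ f (u + 2 * h) - 2 * f (u + h) + f u := by
  have hmid := hf.2 hu' hu (by norm_num : (0 : ℝ) ≤ 1 / 2) (by norm_num : (0 : ℝ) ≤ 1 / 2)
    (by norm_num)
  simp only [smul_eq_mul] at hmid
  rw [show 1 / 2 * (u + 2 * h) + 1 / 2 * u = u + h by ring] at hmid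
  linarith

lemma ConcaveOn.secondDiff_nonpos {s : Set ℝ} {f : ℝ → ℝ} (hf : ConcaveOn ℝ s f) {u h : ℝ}
    (hu : u ∈ s) (hu' : u + 2 * h ∈ s) :
    f (u + 2 * h) - 2 * f (u + h) + f u ≤ 0 := by
  have := hf.neg.secondDiff_nonneg hu hu'
  simp only [Pi.neg_apply] at this
  linarith

lemma antitoneOn_secondDiff_of_concaveOn_deriv {f f' : ℝ → ℝ} {h : ℝ}
    (hf : ContinuousOn f (Ici 0)) (hf' : ∀ u, 0 < u → HasDerivAt f (f' u) u)
    (hconc : ConcaveOn ℝ (Ioi 0) f') (hh : 0 ≤ h) :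
    AntitoneOn (fun u ↦ f (u + 2 * h) - 2 * f (u + h) + f u) (Ici 0) := by
  have hderiv : ∀ u, 0 < u → HasDerivAt (fun u ↦ f (u + 2 * h) - 2 * f (u + h) + f u)
      (f' (u + 2 * h) - 2 * f' (u + h) + f' u) u := fun u hu ↦
    ((((hf' _ (by positivity)).comp_add_const u (2 * h)).sub
      (((hf' _ (by positivity)).comp_add_const u h).const_mul 2)).add (hf' u hu))
  refine antitoneOn_of_deriv_nonpos (convex_Ici 0) ?_ ?_ ?_
  · have hshift (c : ℝ) (hc : 0 ≤ c) : ContinuousOn (fun u ↦ f (u + c)) (Ici 0) :=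
      hf.comp (continuous_add_const c).continuousOn
        fun u (hu : 0 ≤ u) ↦ (by simp only [mem_Ici]; linarith : u + c ∈ Ici 0)
    exact ((hshift (2 * h) (by positivity)).sub (continuousOn_const.mul (hshift h hh))).add hf
  · rw [interior_Ici]
    exact fun u hu ↦ (hderiv u hu).differentiableAt.differentiableWithinAt
  · rw [interior_Ici]
    intro u hu
    rw [(hderiv u hu).deriv]
    exact hconc.secondDiff_nonpos hu (by simp only [mem_Ioi] at hu ⊢; positivity)

lemma antitoneOn_rpow_secondDiff {α h : ℝ} (hα1 : 1 ≤ α) (hα2 : α ≤ 2) (hh : 0 ≤ h) :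
    AntitoneOn (fun u : ℝ ↦ (u + 2 * h) ^ α - 2 * (u + h) ^ α + u ^ α) (Ici 0) := by
  refine antitoneOn_secondDiff_of_concaveOn_deriv (f' := fun u ↦ α * u ^ (α - 1))
    (Real.continuous_rpow_const (by linarith)).continuousOn
    (fun u hu ↦ Real.hasDerivAt_rpow_const (Or.inl hu.ne')) ?_ hh
  exact ((Real.concaveOn_rpow (by linarith) (by linarith)).subset Ioi_subset_Ici_self
    (convex_Ioi 0)).smul (by linarith : (0 : ℝ) ≤ α)

/-- For 1 ≤ α ≤ 2, Δ > 0 and t ≥ a + 2Δ,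
0 ≤ (t-a)^α - 2(t-a-Δ)^α + (t-a-2Δ)^α ≤ (2^α - 2) Δ^α. -/
theorem second_difference_bound (α Δ a t : ℝ) (hα1 : 1 ≤ α) (hα2 : α ≤ 2)
    (hΔ : 0 < Δ) (ht : a + 2 * Δ ≤ t) :
    0 ≤ (t - a) ^ α - 2 * (t - a - Δ) ^ α + (t - a - 2 * Δ) ^ α ∧
      (t - a) ^ α - 2 * (t - a - Δ) ^ α + (t - a - 2 * Δ) ^ α ≤
        ((2:ℝ) ^ α - 2) * Δ ^ α := by
  set u := t - a - 2 * Δ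
  have hu : 0 ≤ u := by linarith
  rw [show t - a - Δ = u + Δ by ring, show t - a = u + 2 * Δ by ring]
  refine ⟨(convexOn_rpow hα1).secondDiff_nonneg hu (by simp only [mem_Ici]; positivity), ?_⟩
  have hg := antitoneOn_rpow_secondDiff hα1 hα2 hΔ.le (mem_Ici.2 le_rfl) (mem_Ici.2 hu) hu
  simp only [zero_add] at hg
  rw [Real.zero_rpow (by linarith), Real.mul_rpow zero_le_two hΔ.le] at hg
  linarith
end

section
/- Let α be a real number with 1 ≤ α ≤ 2, let j ≥ 0 and 0 ≤ k ≤ 2^j - 1 be integers, and let h_{j,k} be the uniform Haar wavelet. Then for every x ∈ [0,1], the Riemann–Liouville fractional integral of order α of h_{j,k} satisfies 0 ≤ (1/Γ(α)) ∫₀^x (x - s)^{α-1} h_{j,k}(s) ds ≤ (2^α / Γ(α+1)) · 2^{-(j+1)α}. -/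
/-! With `a = k / 2 ^ j` and `δ = 2 ^ (-(j + 1))`, the wavelet is
`𝟙[a, ∞) - 2 • 𝟙[a + δ, ∞) + 𝟙[a + 2δ, ∞)`, and for `c ≥ 0` the fractional integral of
`𝟙[c, ∞)` is `max (x - c) 0 ^ α / Γ(α + 1)`. Hence the fractional integral of `h_{j,k}` at `x` is
the second difference `F (t + 2δ) - 2 F (t + δ) + F t` of `F y = max y 0 ^ α`, divided by
`Γ(α + 1)`, where `t = x - a - 2δ`. It is nonnegative because `F` is convex. For `t < 0` it is at
most `F (t + 2δ) ≤ (2δ) ^ α`; for `t ≥ 0` it is antitone in `t`, since its derivative is `α` times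
the second difference of the concave function `y ↦ y ^ (α - 1)`, so it is at most its value
`(2δ) ^ α - 2 δ ^ α` at `t = 0`. -/

open MeasureTheory Set intervalIntegral

theorem haar_eq_indicator (j k : ℕ) (t : ℝ) :
    haar j k t = (Ici ((k : ℝ) / 2 ^ j)).indicator 1 t
      - 2 * (Ici (((k : ℝ) + 1 / 2) / 2 ^ j)).indicator 1 t
      + (Ici (((k : ℝ) + 1) / 2 ^ j)).indicator 1 t := by
  have h₁ : (k : ℝ) / 2 ^ j < ((k : ℝ) + 1 / 2) / 2 ^ j := by gcongr; linarith
  have h₂ : ((k : ℝ) + 1 / 2) / 2 ^ j < ((k : ℝ) + 1) / 2 ^ j := by gcongr; linarith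
  simp only [haar, ite_and, indicator_apply, mem_Ici, Pi.one_apply]
  split_ifs <;> norm_num <;> linarith

theorem intervalIntegrable_indicator_Iic_rpow {α : ℝ} (hα : 0 < α) (d a b : ℝ) :
    IntervalIntegrable ((Iic d).indicator fun u => u ^ (α - 1)) volume a b :=
  intervalIntegrable_iff.2 <|
    (intervalIntegrable_iff.1 (intervalIntegrable_rpow' (by linarith))).indicator
      measurableSet_Iic

theorem integral_indicator_Iic_rpow {α d x : ℝ} (hα : 0 < α) (hdx : d ≤ x) :
    ∫ u in (0 : ℝ)..x, (Iic d).indicator (fun u => u ^ (α - 1)) u = max d 0 ^ α / α := by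
  rcases le_or_gt 0 d with hd | hd
  · calc _ = ∫ u in (0 : ℝ)..d, u ^ (α - 1) := integral_indicator ⟨hd, hdx⟩
      _ = max d 0 ^ α / α := by
        rw [max_eq_left hd, integral_rpow (Or.inl (by linarith)), sub_add_cancel,
          Real.zero_rpow hα.ne', sub_zero]
  · rw [max_eq_right hd.le, Real.zero_rpow hα.ne', zero_div]
    exact integral_zero_ae (Filter.Eventually.of_forall fun u hu =>
      indicator_of_notMem (s := Iic d) (not_le.2 ((le_min hd.le hdx).trans_lt hu.1)) _)

theorem sub_rpow_mul_indicator_Ici_eq {α : ℝ} (x c s : ℝ) :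
    (x - s) ^ (α - 1) * (Ici c).indicator 1 s
      = (Iic (x - c)).indicator (fun u => u ^ (α - 1)) (x - s) := by
  simp only [indicator_apply, mem_Ici, mem_Iic, Pi.one_apply, sub_le_sub_iff_left]
  split_ifs <;> simp

theorem intervalIntegrable_sub_rpow_mul_indicator_Ici {α : ℝ} (hα : 0 < α) (x c : ℝ) :
    IntervalIntegrable (fun s => (x - s) ^ (α - 1) * (Ici c).indicator 1 s) volume 0 x := by
  simp_rw [sub_rpow_mul_indicator_Ici_eq]
  simpa using (intervalIntegrable_indicator_Iic_rpow hα (x - c) x 0).comp_sub_left x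

theorem integral_sub_rpow_mul_indicator_Ici {α c : ℝ} (hα : 0 < α) (hc : 0 ≤ c) (x : ℝ) :
    ∫ s in (0 : ℝ)..x, (x - s) ^ (α - 1) * (Ici c).indicator 1 s = max (x - c) 0 ^ α / α := by
  simp_rw [sub_rpow_mul_indicator_Ici_eq]
  rw [integral_comp_sub_left (fun u => (Iic (x - c)).indicator (fun u => u ^ (α - 1)) u),
    sub_self, sub_zero, integral_indicator_Iic_rpow hα (by linarith)]

theorem integral_sub_rpow_mul_haar {α : ℝ} (hα : 0 < α) (j k : ℕ) (x : ℝ) :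
    ∫ s in (0 : ℝ)..x, (x - s) ^ (α - 1) * haar j k s
      = (max (x - (k : ℝ) / 2 ^ j) 0 ^ α - 2 * max (x - ((k : ℝ) + 1 / 2) / 2 ^ j) 0 ^ α
          + max (x - ((k : ℝ) + 1) / 2 ^ j) 0 ^ α) / α := by
  have hI := intervalIntegrable_sub_rpow_mul_indicator_Ici hα x
  simp_rw [haar_eq_indicator, mul_add, mul_sub, mul_left_comm _ (2 : ℝ)]
  rw [integral_add ((hI _).sub ((hI _).const_mul 2)) (hI _),
    integral_sub (hI _) ((hI _).const_mul 2), intervalIntegral.integral_const_mul,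
    integral_sub_rpow_mul_indicator_Ici hα (by positivity),
    integral_sub_rpow_mul_indicator_Ici hα (by positivity),
    integral_sub_rpow_mul_indicator_Ici hα (by positivity)]
  ring

theorem antitoneOn_rpow_second_difference {α δ : ℝ} (hα1 : 1 ≤ α) (hα2 : α ≤ 2) (hδ : 0 ≤ δ) :
    AntitoneOn (fun u : ℝ => (u + 2 * δ) ^ α - 2 * (u + δ) ^ α + u ^ α) (Ici 0) := by
  have hderiv : ∀ w : ℝ, 0 < w → HasDerivAt (fun u : ℝ => (u + 2 * δ) ^ α - 2 * (u + δ) ^ α + u ^ α)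
      (α * ((w + 2 * δ) ^ (α - 1) - 2 * (w + δ) ^ (α - 1) + w ^ (α - 1))) w := by
    intro w hw
    have hshift : ∀ c : ℝ, 0 ≤ c →
        HasDerivAt (fun u : ℝ => (u + c) ^ α) (α * (w + c) ^ (α - 1)) w := fun c hc => by
      simpa using ((hasDerivAt_id w).add_const c).rpow_const (p := α) (Or.inl (by positivity))
    exact (((hshift (2 * δ) (by positivity)).sub ((hshift δ hδ).const_mul 2)).add
      (Real.hasDerivAt_rpow_const (p := α) (Or.inl hw.ne'))).congr_deriv (by ring)
  refine antitoneOn_of_deriv_nonpos (convex_Ici 0)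
    (by fun_prop (disch := linarith)) (fun w hw => ?_) (fun w hw => ?_) <;>
    rw [interior_Ici, mem_Ioi] at hw
  · exact (hderiv w hw).differentiableAt.differentiableWithinAt
  · rw [(hderiv w hw).deriv]
    have hmid := (Real.concaveOn_rpow (p := α - 1) (by linarith) (by linarith)).2
      (mem_Ici.2 (le_of_lt hw)) (mem_Ici.2 (by positivity : (0 : ℝ) ≤ w + 2 * δ))
      (by norm_num : (0 : ℝ) ≤ 1 / 2) (by norm_num : (0 : ℝ) ≤ 1 / 2) (by norm_num)
    simp only [smul_eq_mul, show (1 / 2 : ℝ) * w + 1 / 2 * (w + 2 * δ) = w + δ by ring] at hmid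
    exact mul_nonpos_of_nonneg_of_nonpos (by linarith) (by linarith)

theorem max_zero_rpow_second_difference_nonneg {α : ℝ} (hα : 1 ≤ α) (t δ : ℝ) :
    0 ≤ max (t + 2 * δ) 0 ^ α - 2 * max (t + δ) 0 ^ α + max t 0 ^ α := by
  have hmax : max (t + δ) 0 ≤ 1 / 2 * max t 0 + 1 / 2 * max (t + 2 * δ) 0 :=
    max_le (by linarith [le_max_left t 0, le_max_left (t + 2 * δ) 0])
      (by linarith [le_max_right t 0, le_max_right (t + 2 * δ) 0])
  have hconv := (convexOn_rpow hα).2 (mem_Ici.2 (le_max_right t 0))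
    (mem_Ici.2 (le_max_right (t + 2 * δ) 0))
    (by norm_num : (0 : ℝ) ≤ 1 / 2) (by norm_num : (0 : ℝ) ≤ 1 / 2) (by norm_num)
  simp only [smul_eq_mul] at hconv
  have := Real.rpow_le_rpow (le_max_right _ _) hmax (by linarith : (0 : ℝ) ≤ α)
  linarith

theorem max_zero_rpow_second_difference_le {α δ : ℝ} (hα1 : 1 ≤ α) (hα2 : α ≤ 2) (hδ : 0 ≤ δ)
    (t : ℝ) : max (t + 2 * δ) 0 ^ α - 2 * max (t + δ) 0 ^ α + max t 0 ^ α ≤ (2 * δ) ^ α := by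
  have hα : 0 < α := by linarith
  rcases le_or_gt 0 t with ht | ht
  · have hanti := antitoneOn_rpow_second_difference hα1 hα2 hδ (mem_Ici.2 le_rfl) (mem_Ici.2 ht) ht
    simp only [zero_add, Real.zero_rpow hα.ne', add_zero] at hanti
    rw [max_eq_left (by positivity), max_eq_left (by positivity), max_eq_left ht]
    linarith [Real.rpow_nonneg hδ α]
  · rw [max_eq_right ht.le, Real.zero_rpow hα.ne', add_zero]
    have : max (t + 2 * δ) 0 ^ α ≤ (2 * δ) ^ α :=
      Real.rpow_le_rpow (le_max_right _ _) (max_le (by linarith) (by positivity)) hα.le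
    linarith [Real.rpow_nonneg (le_max_right (t + δ) 0) α]

theorem two_rpow_div_Gamma_mul_two_rpow_neg {α : ℝ} (hα : 0 < α) (j : ℕ) :
    (2 : ℝ) ^ α / Real.Gamma (α + 1) * (2 : ℝ) ^ (-(((j : ℝ) + 1) * α))
      = (2 * (1 / 2 ^ (j + 1))) ^ α / (α * Real.Gamma α) := by
  rw [Real.Gamma_add_one hα.ne', Real.mul_rpow zero_le_two (by positivity), one_div,
    Real.inv_rpow (by positivity), ← Real.rpow_natCast, ← Real.rpow_mul zero_le_two,
    Real.rpow_neg zero_le_two]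
  push_cast
  ring

theorem fracIntegral_haar_bound_general (α : ℝ) (hα1 : 1 ≤ α) (hα2 : α ≤ 2)
    (j k : ℕ) (x : ℝ) :
    0 ≤ (1 / Real.Gamma α) * ∫ s in (0:ℝ)..x, (x - s) ^ (α - 1) * haar j k s ∧
      (1 / Real.Gamma α) * ∫ s in (0:ℝ)..x, (x - s) ^ (α - 1) * haar j k s ≤
        (2:ℝ) ^ α / Real.Gamma (α + 1) * (2:ℝ) ^ (-(((j:ℝ) + 1) * α)) := by
  have hα : 0 < α := by linarith
  set δ : ℝ := 1 / 2 ^ (j + 1)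
  set t : ℝ := x - ((k : ℝ) + 1) / 2 ^ j
  have hδ : 0 ≤ δ := by positivity
  have ha : x - (k : ℝ) / 2 ^ j = t + 2 * δ := by simp only [t, δ, pow_succ]; field_simp; ring
  have hm : x - ((k : ℝ) + 1 / 2) / 2 ^ j = t + δ := by simp only [t, δ, pow_succ]; field_simp; ring
  rw [integral_sub_rpow_mul_haar hα, ha, hm, two_rpow_div_Gamma_mul_two_rpow_neg hα,
    one_div_mul_eq_div, div_div, mul_comm α]
  exact ⟨by positivity [max_zero_rpow_second_difference_nonneg hα1 t δ],
    by gcongr; exact max_zero_rpow_second_difference_le hα1 hα2 hδ t⟩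

/-- For 1 ≤ α ≤ 2, the Riemann–Liouville fractional integral of order α of the
uniform Haar wavelet is nonnegative and bounded by (2^α/Γ(α+1)) 2^{-(j+1)α} on [0,1]. -/
theorem fracIntegral_haar_bound (α : ℝ) (hα1 : 1 ≤ α) (hα2 : α ≤ 2)
    (j k : ℕ) (hk : k ≤ 2 ^ j - 1) (x : ℝ) (hx : x ∈ Set.Icc (0:ℝ) 1) :
    0 ≤ (1 / Real.Gamma α) * ∫ s in (0:ℝ)..x, (x - s) ^ (α - 1) * haar j k s ∧
      (1 / Real.Gamma α) * ∫ s in (0:ℝ)..x, (x - s) ^ (α - 1) * haar j k s ≤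
        (2:ℝ) ^ α / Real.Gamma (α + 1) * (2:ℝ) ^ (-(((j:ℝ) + 1) * α)) :=
  fracIntegral_haar_bound_general α hα1 hα2 j k x
end

section
/- Let β be a real number with 0 < β ≤ 1, let j ≥ 0 and 0 ≤ k ≤ 2^j - 1 be integers, and let h_{j,k} be the uniform Haar wavelet. Then for every x ∈ [0,1], the Riemann–Liouville fractional integral of order β of h_{j,k} satisfies |(1/Γ(β)) ∫₀^x (x - s)^{β-1} h_{j,k}(s) ds| ≤ (2^{1+β} / Γ(β+1)) · 2^{-(j+1)β}. -/
/-!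
Since `|h_{j,k}| ≤ 1` and `h_{j,k}` vanishes off an interval `[a, b]` of length `2^{-j}`, the
integral is dominated by the integral of the kernel `(x - s)^{β-1}` over `[lo, hi] = [a, b] ∩ [0, x]`,
which is `((x - lo)^β - (x - hi)^β) / β ≤ (hi - lo)^β / β` by subadditivity of `t ↦ t^β` for
`β ≤ 1`. Then `Γ(β + 1) = β Γ(β)`, and the stated bound holds with a spare factor `2`.
-/

open MeasureTheory Set

lemma abs_haar_le_one (j k : ℕ) (t : ℝ) : |haar j k t| ≤ 1 := by
  unfold haar
  split_ifs <;> norm_num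

lemma mem_Icc_of_haar_ne_zero {j k : ℕ} {t : ℝ} (h : haar j k t ≠ 0) :
    t ∈ Icc ((k : ℝ) / 2 ^ j) (((k : ℝ) + 1) / 2 ^ j) := by
  unfold haar at h
  split_ifs at h with h₁ h₂
  · exact ⟨h₁.1, h₁.2.le.trans (by gcongr; norm_num)⟩
  · exact ⟨le_trans (by gcongr; norm_num) h₂.1, h₂.2.le⟩
  · exact absurd rfl h

lemma Real.rpow_sub_rpow_le_rpow_sub {u v p : ℝ} (hv : 0 ≤ v) (hvu : v ≤ u) (hp0 : 0 ≤ p)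
    (hp1 : p ≤ 1) : u ^ p - v ^ p ≤ (u - v) ^ p := by
  have := Real.rpow_add_le_add_rpow (sub_nonneg.2 hvu) hv hp0 hp1
  rw [sub_add_cancel] at this
  linarith

section RiemannLiouvilleKernel

variable {β x : ℝ}

lemma integral_rpow_sub_le (hβ0 : 0 < β) (hβ1 : β ≤ 1) {a b : ℝ} (hab : a ≤ b) (hbx : b ≤ x) :
    ∫ s in a..b, (x - s) ^ (β - 1) ≤ (b - a) ^ β / β := by
  rw [intervalIntegral.integral_comp_sub_left (fun u ↦ u ^ (β - 1)) x,
    integral_rpow (Or.inl (by linarith)), sub_add_cancel]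
  gcongr
  simpa using Real.rpow_sub_rpow_le_rpow_sub (sub_nonneg.2 hbx) (sub_le_sub_left hab x) hβ0.le hβ1

lemma setIntegral_Ioc_inter_rpow_sub_le (hβ0 : 0 < β) (hβ1 : β ≤ 1) {a b : ℝ} (hab : a ≤ b) :
    ∫ s in Ioc a b ∩ Ioc 0 x, (x - s) ^ (β - 1) ≤ (b - a) ^ β / β := by
  rw [Ioc_inter_Ioc]
  rcases le_or_gt (a ⊔ 0) (b ⊓ x) with hle | hlt
  · rw [← intervalIntegral.integral_of_le hle]
    calc _ ≤ (b ⊓ x - a ⊔ 0) ^ β / β := integral_rpow_sub_le hβ0 hβ1 hle inf_le_right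
      _ ≤ (b - a) ^ β / β := by
        gcongr
        exacts [inf_le_left, le_sup_left]
  · rw [Ioc_eq_empty hlt.not_gt, Measure.restrict_empty, integral_zero_measure]
    have : 0 ≤ b - a := sub_nonneg.2 hab
    positivity

lemma abs_integral_rpow_sub_mul_le (hβ0 : 0 < β) (hβ1 : β ≤ 1) (hx : 0 ≤ x) {a b : ℝ}
    (hab : a ≤ b) {f : ℝ → ℝ} (hf : ∀ s, |f s| ≤ 1) (hsupp : ∀ s, f s ≠ 0 → s ∈ Icc a b) :
    |∫ s in 0..x, (x - s) ^ (β - 1) * f s| ≤ (b - a) ^ β / β := by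
  set K : ℝ → ℝ := fun s ↦ (x - s) ^ (β - 1)
  have hK : IntegrableOn K (Ioc 0 x) := by
    have := (intervalIntegral.intervalIntegrable_rpow' (a := 0) (b := x) (r := β - 1)
      (by linarith)).comp_sub_left x
    simpa [K] using this.symm.1
  have hbound : ∀ s ∈ Ioc 0 x, ‖K s * f s‖ ≤ (Icc a b).indicator K s := by
    intro s hs
    have hKs : 0 ≤ K s := Real.rpow_nonneg (sub_nonneg.2 hs.2) _
    by_cases hfs : f s = 0
    · simpa [hfs] using indicator_apply_nonneg fun _ ↦ hKs
    · rw [indicator_of_mem (hsupp s hfs), norm_mul, Real.norm_of_nonneg hKs, Real.norm_eq_abs]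
      exact mul_le_of_le_one_right hKs (hf s)
  calc |∫ s in 0..x, K s * f s|
      ≤ ∫ s in 0..x, (Icc a b).indicator K s :=
        intervalIntegral.norm_integral_le_of_norm_le hx (.of_forall hbound)
          ((intervalIntegrable_iff_integrableOn_Ioc_of_le hx).2
            (hK.indicator measurableSet_Icc))
    _ = ∫ s in Ioc a b ∩ Ioc 0 x, K s := by
        rw [intervalIntegral.integral_of_le hx, integral_indicator measurableSet_Icc,
          Measure.restrict_restrict measurableSet_Icc]
        exact setIntegral_congr_set (Ioc_ae_eq_Icc.symm.inter .rfl)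
    _ ≤ (b - a) ^ β / β := setIntegral_Ioc_inter_rpow_sub_le hβ0 hβ1 hab

lemma abs_integral_rpow_sub_mul_haar_le (hβ0 : 0 < β) (hβ1 : β ≤ 1) (hx : 0 ≤ x) (j k : ℕ) :
    |∫ s in 0..x, (x - s) ^ (β - 1) * haar j k s| ≤ (2 : ℝ) ^ (-((j : ℝ) * β)) / β := by
  calc _ ≤ (((k : ℝ) + 1) / 2 ^ j - k / 2 ^ j) ^ β / β :=
        abs_integral_rpow_sub_mul_le hβ0 hβ1 hx (by gcongr; linarith) (abs_haar_le_one j k)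
          fun _ ↦ mem_Icc_of_haar_ne_zero
    _ = (2 : ℝ) ^ (-((j : ℝ) * β)) / β := by
        rw [← sub_div, add_sub_cancel_left, one_div, ← Real.rpow_natCast,
          ← Real.rpow_neg zero_le_two, ← Real.rpow_mul zero_le_two, neg_mul]

end RiemannLiouvilleKernel

theorem fracIntegral_haar_abs_bound_general (β : ℝ) (hβ0 : 0 < β) (hβ1 : β ≤ 1)
    (j k : ℕ) (x : ℝ) (hx : x ∈ Set.Icc (0:ℝ) 1) :
    |(1 / Real.Gamma β) * ∫ s in (0:ℝ)..x, (x - s) ^ (β - 1) * haar j k s| ≤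
      (2:ℝ) ^ (1 + β) / Real.Gamma (β + 1) * (2:ℝ) ^ (-(((j:ℝ) + 1) * β)) := by
  have hΓ : 0 < Real.Gamma β := Real.Gamma_pos_of_pos hβ0
  have hscale : (2 : ℝ) ^ (1 + β) * 2 ^ (-(((j : ℝ) + 1) * β)) = 2 * 2 ^ (-((j : ℝ) * β)) := by
    rw [← Real.rpow_add two_pos, show 1 + β + -(((j : ℝ) + 1) * β) = 1 + -((j : ℝ) * β) by ring,
      Real.rpow_add two_pos, Real.rpow_one]
  rw [abs_mul, abs_of_pos (by positivity), Real.Gamma_add_one hβ0.ne']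
  calc 1 / Real.Gamma β * |∫ s in (0:ℝ)..x, (x - s) ^ (β - 1) * haar j k s|
      ≤ 1 / Real.Gamma β * ((2 : ℝ) ^ (-((j : ℝ) * β)) / β) := by
        gcongr
        exact abs_integral_rpow_sub_mul_haar_le hβ0 hβ1 hx.1 j k
    _ = (2 : ℝ) ^ (-((j : ℝ) * β)) / (β * Real.Gamma β) := by ring
    _ ≤ 2 * (2 : ℝ) ^ (-((j : ℝ) * β)) / (β * Real.Gamma β) := by
        gcongr
        exact le_mul_of_one_le_left (by positivity) one_le_two
    _ = 2 ^ (1 + β) / (β * Real.Gamma β) * 2 ^ (-(((j : ℝ) + 1) * β)) := by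
        rw [div_mul_eq_mul_div, hscale]

/-- For 0 < β ≤ 1, the Riemann–Liouville fractional integral of order β of the
uniform Haar wavelet is bounded in absolute value by (2^{1+β}/Γ(β+1)) 2^{-(j+1)β}
on [0,1]. -/
theorem fracIntegral_haar_abs_bound (β : ℝ) (hβ0 : 0 < β) (hβ1 : β ≤ 1)
    (j k : ℕ) (hk : k ≤ 2 ^ j - 1) (x : ℝ) (hx : x ∈ Set.Icc (0:ℝ) 1) :
    |(1 / Real.Gamma β) * ∫ s in (0:ℝ)..x, (x - s) ^ (β - 1) * haar j k s| ≤
      (2:ℝ) ^ (1 + β) / Real.Gamma (β + 1) * (2:ℝ) ^ (-(((j:ℝ) + 1) * β)) :=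
  fracIntegral_haar_abs_bound_general β hβ0 hβ1 j k x hx
end

section
/- Let α be a real number with 1 ≤ α ≤ 2, let J ≥ 0 be an integer, let ε > 0, and for each pair of integers (j,k) with j ≥ 0 and 0 ≤ k ≤ 2^j - 1 let a_{j,k} be a real number with |a_{j,k}| ≤ ε · 2^{-(j+1)}. Then for every x ∈ [0,1] the tail of the Haar series of fractional integrals converges absolutely and satisfies Σ_{j=J+1}^{∞} Σ_{k=0}^{2^j - 1} |a_{j,k}| · (1/Γ(α)) ∫₀^x (x - s)^{α-1} h_{j,k}(s) ds ≤ (ε · 2^{α-1} / Γ(α+1)) · 2^{-α(J+2)} / (1 - 2^{-α}). -/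
open MeasureTheory Set

theorem Monotone.intervalIntegral_le_add {f : ℝ → ℝ} (hf : Monotone f) {a b : ℝ} (hab : a ≤ b)
    {c : ℝ} (hc : 0 ≤ c) : ∫ u in a..b, f u ≤ ∫ u in a + c..b + c, f u := by
  rw [← intervalIntegral.integral_comp_add_right]
  exact intervalIntegral.integral_mono_on hab hf.intervalIntegrable
    (hf.comp (monotone_id.add_const c)).intervalIntegrable fun u _ => hf (by linarith)

theorem Antitone.sum_range_sub_le {G : Type*} [AddCommGroup G] [PartialOrder G]
    [IsOrderedAddMonoid G] {d : ℕ → G} (hd : Antitone d) (n : ℕ) :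
    ∑ k ∈ Finset.range n, (d (2 * k) - d (2 * k + 1)) ≤ d 0 - d (2 * n) :=
  calc ∑ k ∈ Finset.range n, (d (2 * k) - d (2 * k + 1))
      ≤ ∑ k ∈ Finset.range n, (d (2 * k) - d (2 * (k + 1))) :=
        Finset.sum_le_sum fun k _ => sub_le_sub_left (hd (by omega)) _
    _ = d 0 - d (2 * n) := Finset.sum_range_sub' (fun k => d (2 * k)) n

section IndicatorIntegral

variable {E : Type*} [NormedAddCommGroup E] [NormedSpace ℝ E] {g : ℝ → E} {x : ℝ}

theorem intervalIntegral_indicator_Ioc (hg : ∀ u < 0, g u = 0) (hx : 0 ≤ x) {a b : ℝ}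
    (hab : a ≤ b) (hbx : b ≤ x) :
    ∫ u in (0:ℝ)..x, (Ioc a b).indicator g u = ∫ u in a..b, g u := by
  rw [intervalIntegral.integral_of_le hx, intervalIntegral.integral_of_le hab,
    setIntegral_indicator measurableSet_Ioc, Ioc_inter_Ioc, min_eq_right hbx, max_comm]
  refine (setIntegral_eq_of_subset_of_ae_sdiff_eq_zero measurableSet_Ioc.nullMeasurableSet
    (Ioc_subset_Ioc_left (le_max_left a 0)) ?_).symm
  filter_upwards [Measure.ae_ne volume 0] with u hu0 hu
  obtain ⟨⟨hau, hub⟩, hu⟩ := hu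
  have : u ≤ 0 := by
    by_contra! h
    exact hu ⟨max_lt hau h, hub⟩
  exact hg u (lt_of_le_of_ne this hu0)

theorem intervalIntegral_indicator_Ico_comp_sub (hg : ∀ u < 0, g u = 0) (hx : 0 ≤ x) {p q : ℝ}
    (hp : 0 ≤ p) (hpq : p ≤ q) :
    ∫ s in (0:ℝ)..x, (Ico p q).indicator (fun s => g (x - s)) s = ∫ u in x - q..x - p, g u := by
  have hpre : ∀ s, (Ico p q).indicator (fun s => g (x - s)) s
      = (Ioc (x - q) (x - p)).indicator g (x - s) := fun s => by
    rw [← preimage_const_sub_Ico, ← indicator_comp_right (fun s => x - s)]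
    simp only [← preimage_comp, Function.comp_def, sub_sub_cancel, preimage_id']
  simp_rw [hpre]
  rw [intervalIntegral.integral_comp_sub_left (fun u => (Ioc (x - q) (x - p)).indicator g u) x,
    sub_self, sub_zero]
  exact intervalIntegral_indicator_Ioc hg hx (by linarith) (by linarith)

end IndicatorIntegral

/-- Equal to `0 ^ (α - 1)` at `0`, so that `rlKernel α (x - s) = (x - s) ^ (α - 1)` on all of
`[0, x]`. -/
noncomputable def rlKernel (α : ℝ) : ℝ → ℝ := (Ici 0).indicator fun u => u ^ (α - 1)

section rlKernel

variable {α : ℝ}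

theorem rlKernel_of_neg {u : ℝ} (hu : u < 0) : rlKernel α u = 0 :=
  indicator_of_notMem (not_le.2 hu) _

theorem rlKernel_of_nonneg {u : ℝ} (hu : 0 ≤ u) : rlKernel α u = u ^ (α - 1) :=
  indicator_of_mem hu _

theorem rlKernel_nonneg (u : ℝ) : 0 ≤ rlKernel α u :=
  indicator_nonneg (fun _ hu => Real.rpow_nonneg hu _) u

theorem rlKernel_monotone (hα : 1 ≤ α) : Monotone (rlKernel α) := by
  intro u v huv
  rcases lt_or_ge u 0 with hu | hu
  · rw [rlKernel_of_neg hu]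
    exact rlKernel_nonneg v
  · rw [rlKernel_of_nonneg hu, rlKernel_of_nonneg (hu.trans huv)]
    exact Real.rpow_le_rpow hu huv (by linarith)

theorem rlKernel_le_one (hα : 1 ≤ α) {u : ℝ} (hu : u ≤ 1) : rlKernel α u ≤ 1 := by
  rcases lt_or_ge u 0 with hu0 | hu0
  · rw [rlKernel_of_neg hu0]
    exact zero_le_one
  · rw [rlKernel_of_nonneg hu0]
    exact Real.rpow_le_one hu0 hu (by linarith)

end rlKernel

/-- The integral of `(x - s)₊ ^ (α - 1)` over `s ∈ [m h, (m + 1) h]`. -/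
noncomputable def rlKernelIntegral (α x h : ℝ) (m : ℕ) : ℝ :=
  ∫ u in x - (m + 1) * h..x - m * h, rlKernel α u

section rlKernelIntegral

variable {α x h : ℝ}

theorem rlKernelIntegral_nonneg (hh : 0 ≤ h) (m : ℕ) : 0 ≤ rlKernelIntegral α x h m :=
  intervalIntegral.integral_nonneg (by linarith) fun u _ => rlKernel_nonneg u

theorem rlKernelIntegral_antitone (hα : 1 ≤ α) (hh : 0 ≤ h) : Antitone (rlKernelIntegral α x h) :=
  antitone_nat_of_succ_le fun m =>
    calc rlKernelIntegral α x h (m + 1)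
        = ∫ u in x - (m + 1 + 1) * h..x - (m + 1) * h, rlKernel α u := by
          simp only [rlKernelIntegral, Nat.cast_succ]
      _ ≤ ∫ u in x - (m + 1 + 1) * h + h..x - (m + 1) * h + h, rlKernel α u :=
          (rlKernel_monotone hα).intervalIntegral_le_add (by linarith) hh
      _ = rlKernelIntegral α x h m := by unfold rlKernelIntegral; congr 1 <;> ring

theorem rlKernelIntegral_zero_le (hα : 1 ≤ α) (hx : x ≤ 1) (hh : 0 ≤ h) :
    rlKernelIntegral α x h 0 ≤ h := by
  have hle : ∫ u in x - h..x, rlKernel α u ≤ ∫ u in x - h..x, (1 : ℝ) :=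
    intervalIntegral.integral_mono_on (by linarith) (rlKernel_monotone hα).intervalIntegrable
      intervalIntegrable_const fun u hu => rlKernel_le_one hα (hu.2.trans hx)
  simpa [rlKernelIntegral] using hle

end rlKernelIntegral

theorem haar_eq_indicator_sub_indicator (j k : ℕ) :
    haar j k = (Ico ((k : ℝ) / 2 ^ j) ((k + 1 / 2) / 2 ^ j)).indicator 1
      - (Ico (((k : ℝ) + 1 / 2) / 2 ^ j) ((k + 1) / 2 ^ j)).indicator 1 := by
  ext t
  simp only [haar, Pi.sub_apply, indicator, mem_Ico, Pi.one_apply]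
  split_ifs <;> simp_all
  linarith

section HaarIntegral

variable {α x : ℝ}

theorem integral_rpow_mul_haar (hα : 1 ≤ α) (hx : 0 ≤ x) (j k : ℕ) :
    ∫ s in (0:ℝ)..x, (x - s) ^ (α - 1) * haar j k s
      = rlKernelIntegral α x (2 ^ (j + 1))⁻¹ (2 * k)
        - rlKernelIntegral α x (2 ^ (j + 1))⁻¹ (2 * k + 1) := by
  have hint : ∀ p q : ℝ, IntervalIntegrable
      ((Ico p q).indicator fun s => rlKernel α (x - s)) volume 0 x := fun p q => by
    have h := ((rlKernel_monotone hα).comp_antitone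
      fun s t hst => sub_le_sub_left hst x).intervalIntegrable (μ := volume) (a := 0) (b := x)
    exact ⟨h.1.indicator measurableSet_Ico, h.2.indicator measurableSet_Ico⟩
  have hk : (0 : ℝ) ≤ k / 2 ^ j := by positivity
  calc ∫ s in (0:ℝ)..x, (x - s) ^ (α - 1) * haar j k s
      = ∫ s in (0:ℝ)..x, ((Ico ((k : ℝ) / 2 ^ j) ((k + 1 / 2) / 2 ^ j)).indicator
            (fun s => rlKernel α (x - s)) s
          - (Ico (((k : ℝ) + 1 / 2) / 2 ^ j) ((k + 1) / 2 ^ j)).indicator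
            (fun s => rlKernel α (x - s)) s) := by
        refine intervalIntegral.integral_congr fun s hs => ?_
        rw [uIcc_of_le hx] at hs
        have hψ : rlKernel α (x - s) = (x - s) ^ (α - 1) := rlKernel_of_nonneg (sub_nonneg.2 hs.2)
        simp only [haar_eq_indicator_sub_indicator, Pi.sub_apply, indicator_apply, hψ, Pi.one_apply]
        split_ifs <;> ring
    _ = _ := by
      rw [intervalIntegral.integral_sub (hint _ _) (hint _ _),
        intervalIntegral_indicator_Ico_comp_sub (fun u => rlKernel_of_neg) hx hk
          (by gcongr; norm_num),
        intervalIntegral_indicator_Ico_comp_sub (fun u => rlKernel_of_neg) hx (by positivity)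
          (by gcongr; norm_num)]
      simp only [rlKernelIntegral]
      push_cast
      congr 2 <;> field_simp <;> ring

theorem integral_rpow_mul_haar_nonneg (hα : 1 ≤ α) (hx : 0 ≤ x) (j k : ℕ) :
    0 ≤ ∫ s in (0:ℝ)..x, (x - s) ^ (α - 1) * haar j k s := by
  rw [integral_rpow_mul_haar hα hx, sub_nonneg]
  exact rlKernelIntegral_antitone hα (by positivity) (Nat.le_succ _)

theorem sum_integral_rpow_mul_haar_le (hα : 1 ≤ α) (hx0 : 0 ≤ x) (hx1 : x ≤ 1) (j : ℕ) :
    ∑ k ∈ Finset.range (2 ^ j), ∫ s in (0:ℝ)..x, (x - s) ^ (α - 1) * haar j k s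
      ≤ (2 ^ (j + 1))⁻¹ := by
  have hh : (0 : ℝ) ≤ (2 ^ (j + 1))⁻¹ := by positivity
  simp_rw [integral_rpow_mul_haar hα hx0]
  calc _ ≤ rlKernelIntegral α x (2 ^ (j + 1))⁻¹ 0
        - rlKernelIntegral α x (2 ^ (j + 1))⁻¹ (2 * 2 ^ j) :=
        (rlKernelIntegral_antitone hα hh).sum_range_sub_le _
    _ ≤ rlKernelIntegral α x (2 ^ (j + 1))⁻¹ 0 := sub_le_self _ (rlKernelIntegral_nonneg hh _)
    _ ≤ (2 ^ (j + 1))⁻¹ := rlKernelIntegral_zero_le hα hx1 hh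

end HaarIntegral

theorem mul_sq_le_two_rpow_mul_rpow {α δ : ℝ} (hα1 : 1 ≤ α) (hα2 : α ≤ 2) (hδ0 : 0 ≤ δ)
    (hδ : δ ≤ 1 / 2) : α * δ ^ 2 ≤ 2 ^ (α - 1) * δ ^ α := by
  have hsplit : δ ^ 2 = δ ^ α * δ ^ (2 - α) := by
    rw [← Real.rpow_add' hδ0 (by norm_num), add_sub_cancel, Real.rpow_two]
  have hsmall : δ ^ (2 - α) ≤ 2 ^ (α - 2) := by
    calc δ ^ (2 - α) ≤ (1 / 2 : ℝ) ^ (2 - α) := Real.rpow_le_rpow hδ0 hδ (by linarith)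
      _ = 2 ^ (α - 2) := by
        rw [one_div, Real.inv_rpow zero_le_two, ← Real.rpow_neg zero_le_two, neg_sub]
  have htwo : (2 : ℝ) ^ (α - 1) = 2 * 2 ^ (α - 2) := by
    rw [show α - 1 = 1 + (α - 2) by ring, Real.rpow_add zero_lt_two, Real.rpow_one]
  rw [hsplit, htwo]
  have := Real.rpow_nonneg hδ0 α
  have := Real.rpow_nonneg hδ0 (2 - α)
  nlinarith

theorem sum_abs_mul_integral_rpow_mul_haar_le {α ε x : ℝ} (hα1 : 1 ≤ α) (hα2 : α ≤ 2) (hε : 0 ≤ ε)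
    (hx : x ∈ Icc 0 1) (j : ℕ) (a : ℕ → ℝ) (ha : ∀ k < 2 ^ j, |a k| ≤ ε / 2 ^ (j + 1)) :
    ∑ k ∈ Finset.range (2 ^ j), |a k| *
        ((1 / Real.Gamma α) * ∫ s in (0:ℝ)..x, (x - s) ^ (α - 1) * haar j k s)
      ≤ ε * 2 ^ (α - 1) / Real.Gamma (α + 1) * ((2:ℝ) ^ (-α)) ^ (j + 1) := by
  have hα : 0 < α := by linarith
  set δ : ℝ := (2 ^ (j + 1))⁻¹ with hδ_def
  have hδ0 : 0 ≤ δ := by positivity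
  have hδ : δ ≤ 1 / 2 := by
    rw [hδ_def, one_div]
    exact inv_anti₀ zero_lt_two (le_self_pow₀ one_le_two (Nat.succ_ne_zero j))
  have hδα : δ ^ α = ((2:ℝ) ^ (-α)) ^ (j + 1) := by
    rw [hδ_def, ← Real.rpow_natCast, ← Real.rpow_natCast, Real.inv_rpow (by positivity),
      ← Real.rpow_mul zero_le_two, ← Real.rpow_mul zero_le_two, neg_mul,
      Real.rpow_neg zero_le_two, mul_comm]
  calc ∑ k ∈ Finset.range (2 ^ j), |a k| *
        ((1 / Real.Gamma α) * ∫ s in (0:ℝ)..x, (x - s) ^ (α - 1) * haar j k s)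
      ≤ ∑ k ∈ Finset.range (2 ^ j), ε * δ *
        ((1 / Real.Gamma α) * ∫ s in (0:ℝ)..x, (x - s) ^ (α - 1) * haar j k s) := by
        refine Finset.sum_le_sum fun k hk => mul_le_mul_of_nonneg_right ?_ ?_
        · simpa [div_eq_mul_inv] using ha k (Finset.mem_range.1 hk)
        · exact mul_nonneg (by positivity) (integral_rpow_mul_haar_nonneg hα1 hx.1 j k)
    _ = ε * δ / Real.Gamma α *
        ∑ k ∈ Finset.range (2 ^ j), ∫ s in (0:ℝ)..x, (x - s) ^ (α - 1) * haar j k s := by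
        rw [Finset.mul_sum]
        exact Finset.sum_congr rfl fun k _ => by ring
    _ ≤ ε * δ / Real.Gamma α * δ :=
        mul_le_mul_of_nonneg_left (sum_integral_rpow_mul_haar_le hα1 hx.1 hx.2 j) (by positivity)
    _ = ε / (α * Real.Gamma α) * (α * δ ^ 2) := by field_simp
    _ ≤ ε / (α * Real.Gamma α) * (2 ^ (α - 1) * δ ^ α) :=
        mul_le_mul_of_nonneg_left (mul_sq_le_two_rpow_mul_rpow hα1 hα2 hδ0 hδ) (by positivity)
    _ = ε * 2 ^ (α - 1) / Real.Gamma (α + 1) * ((2:ℝ) ^ (-α)) ^ (j + 1) := by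
        rw [Real.Gamma_add_one hα.ne', hδα]
        ring

/-- Tail bound for the Haar series of fractional integrals: if the Haar
coefficients satisfy |a_{j,k}| ≤ ε 2^{-(j+1)}, then for 1 ≤ α ≤ 2 and x ∈ [0,1]
the tail Σ_{j>J} Σ_k |a_{j,k}| (I^α h_{j,k})(x) converges and is bounded by
(ε 2^{α-1}/Γ(α+1)) · 2^{-α(J+2)}/(1 - 2^{-α}). -/
theorem haar_series_tail_bound (α : ℝ) (hα1 : 1 ≤ α) (hα2 : α ≤ 2)
    (J : ℕ) (ε : ℝ) (hε : 0 < ε) (a : ℕ → ℕ → ℝ)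
    (ha : ∀ j k : ℕ, k ≤ 2 ^ j - 1 → |a j k| ≤ ε / 2 ^ (j + 1))
    (x : ℝ) (hx : x ∈ Set.Icc (0:ℝ) 1) :
    Summable (fun j : ℕ => ∑ k ∈ Finset.range (2 ^ (J + 1 + j)),
      |a (J + 1 + j) k| *
        ((1 / Real.Gamma α) *
          ∫ s in (0:ℝ)..x, (x - s) ^ (α - 1) * haar (J + 1 + j) k s)) ∧
    (∑' j : ℕ, ∑ k ∈ Finset.range (2 ^ (J + 1 + j)),
      |a (J + 1 + j) k| *
        ((1 / Real.Gamma α) *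
          ∫ s in (0:ℝ)..x, (x - s) ^ (α - 1) * haar (J + 1 + j) k s)) ≤
      ε * (2:ℝ) ^ (α - 1) / Real.Gamma (α + 1) *
        (2:ℝ) ^ (-(α * ((J:ℝ) + 2))) / (1 - (2:ℝ) ^ (-α)) := by
  set T : ℕ → ℝ := fun i => ∑ k ∈ Finset.range (2 ^ (J + 1 + i)), |a (J + 1 + i) k| *
      ((1 / Real.Gamma α) * ∫ s in (0:ℝ)..x, (x - s) ^ (α - 1) * haar (J + 1 + i) k s)
  set r : ℝ := (2:ℝ) ^ (-α) with hr
  set K : ℝ := ε * (2:ℝ) ^ (α - 1) / Real.Gamma (α + 1) * r ^ (J + 2) with hK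
  have hr0 : 0 ≤ r := by positivity
  have hr1 : r < 1 := Real.rpow_lt_one_of_one_lt_of_neg one_lt_two (by linarith)
  have hlevel : ∀ i, T i ≤ K * r ^ i := fun i => by
    have := sum_abs_mul_integral_rpow_mul_haar_le hα1 hα2 hε.le hx (J + 1 + i) (a (J + 1 + i))
      fun k hk => ha _ k (Nat.le_sub_one_of_lt hk)
    rw [← hr, show J + 1 + i + 1 = J + 2 + i by omega] at this
    exact this.trans_eq (by rw [hK, pow_add]; ring)
  have hnonneg : ∀ i, 0 ≤ T i := fun i => Finset.sum_nonneg fun k _ => mul_nonneg (abs_nonneg _)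
    (mul_nonneg (by positivity) (integral_rpow_mul_haar_nonneg hα1 hx.1 _ k))
  have hgeom : Summable fun i => K * r ^ i := (summable_geometric_of_lt_one hr0 hr1).mul_left K
  have hsum : Summable T := .of_nonneg_of_le hnonneg hlevel hgeom
  refine ⟨hsum, (hsum.tsum_mono hgeom hlevel).trans_eq ?_⟩
  have hrJ : r ^ (J + 2) = (2:ℝ) ^ (-(α * ((J:ℝ) + 2))) := by
    rw [← Real.rpow_natCast, ← Real.rpow_mul zero_le_two]
    push_cast
    ring_nf
  rw [tsum_mul_left, tsum_geometric_of_lt_one hr0 hr1, hK, hrJ, div_eq_mul_inv _ (1 - r)]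
end
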